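/- Let P = (1−π₀)·P_{θ₀} + π₀·Q belong to the gross error model of the elliptical family, with θ₀ ∈ Θ, π₀ ∈ [0,1/2), and Q a probability on ℝ^p with Q(B) = 0 for every MVE B of P. If A = E(μ,Σ,r) is an MVE of P, then (1) P(A) = 1/2, and (2) lim_{ε→0+} P(E(μ,Σ,r+ε)) = 1/2. -/

import Mathlib

open MeasureTheory Matrix Filter Set
open scoped RealInnerProductSpace ENNReal

noncomputable section

/-- The quadratic form `vᵀ S⁻¹ v`. -/
def quadForm {p : ℕ} (S : Matrix (Fin p) (Fin p) ℝ) (v : EuclideanSpace ℝ (Fin p)) : ℝ :=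
  ⟪v, Matrix.toEuclideanLin S⁻¹ v⟫

/-- The elliptical density `det(S)^{-1/2} g((x-μ)ᵀ S⁻¹ (x-μ))`. -/
def ellDensity {p : ℕ} (g : ℝ → ℝ) (μ : EuclideanSpace ℝ (Fin p))
    (S : Matrix (Fin p) (Fin p) ℝ) (x : EuclideanSpace ℝ (Fin p)) : ℝ :=
  (Real.sqrt S.det)⁻¹ * g (quadForm S (x - μ))

/-- The elliptical probability measure `P_θ`, `θ = (μ, S)`. -/
def ellMeasure {p : ℕ} (g : ℝ → ℝ) (μ : EuclideanSpace ℝ (Fin p))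
    (S : Matrix (Fin p) (Fin p) ℝ) : Measure (EuclideanSpace ℝ (Fin p)) :=
  volume.withDensity fun x => ENNReal.ofReal (ellDensity g μ S x)

/-- Condition G1: a strictly decreasing sequence tending to 0 on which `g` strictly increases. -/
def CondG1 (g : ℝ → ℝ) : Prop :=
  ∃ t : ℕ → ℝ, StrictAnti t ∧ Tendsto t atTop (nhds 0) ∧ (∀ n, 0 < t n) ∧
    ∀ n, g (t n) < g (t (n + 1))

open Classical in
/-- Kullback-Leibler divergence `KL(μ‖ν) = ∫ log (dμ/dν) dμ`, with value `+∞` if `μ` is not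
absolutely continuous w.r.t. `ν` (or the integral diverges). -/
def KL {α : Type*} [MeasurableSpace α] (μ ν : Measure α) : EReal :=
  if μ ≪ ν ∧ Integrable (fun x => Real.log ((μ.rnDeriv ν x).toReal)) μ then
    ((∫ x, Real.log ((μ.rnDeriv ν x).toReal) ∂μ : ℝ) : EReal)
  else ⊤

/-- The ellipsoid `E(μ, S, r) = {x : (x-μ)ᵀ S⁻¹ (x-μ) ≤ r²}`. -/
def ellipsoid {p : ℕ} (μ : EuclideanSpace ℝ (Fin p)) (S : Matrix (Fin p) (Fin p) ℝ)
    (r : ℝ) : Set (EuclideanSpace ℝ (Fin p)) :=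
  {x | quadForm S (x - μ) ≤ r ^ 2}

/-- `A` is a minimum volume ellipsoid (MVE) of `P`: it is an ellipsoid of `P`-probability
at least `1/2` whose volume is minimal among all such ellipsoids. -/
def IsMVE {p : ℕ} (P : Measure (EuclideanSpace ℝ (Fin p)))
    (A : Set (EuclideanSpace ℝ (Fin p))) : Prop :=
  (∃ (μ : EuclideanSpace ℝ (Fin p)) (S : Matrix (Fin p) (Fin p) ℝ) (r : ℝ),
    S.PosDef ∧ 0 < r ∧ A = ellipsoid μ S r) ∧
  (1 : ℝ≥0∞) / 2 ≤ P A ∧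
  ∀ (μ' : EuclideanSpace ℝ (Fin p)) (S' : Matrix (Fin p) (Fin p) ℝ) (r' : ℝ),
    S'.PosDef → 0 < r' → (1 : ℝ≥0∞) / 2 ≤ P (ellipsoid μ' S' r') →
      volume A ≤ volume (ellipsoid μ' S' r')

/-- The gross error model contamination `(1-π₀)·P_θ₀ + π₀·Q`. -/
def gemMeasure {p : ℕ} (g : ℝ → ℝ) (μ₀ : EuclideanSpace ℝ (Fin p))
    (S₀ : Matrix (Fin p) (Fin p) ℝ) (π₀ : ℝ)
    (Q : Measure (EuclideanSpace ℝ (Fin p))) : Measure (EuclideanSpace ℝ (Fin p)) :=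
  ENNReal.ofReal (1 - π₀) • ellMeasure g μ₀ S₀ + ENNReal.ofReal π₀ • Q

/-!
If `P(A) > 1/2`, the ellipsoids `E(μ, S, t)` with `t ↑ r` exhaust `A` up to the level set
`{x | (x-μ)ᵀ S⁻¹ (x-μ) = r²}`. Since `vol E(μ, S, t) = tᵖ · vol E(0, S, 1)` is continuous in `t`,
that level set is Lebesgue-null, hence null for the absolutely continuous part of `P`, and it is
`Q`-null because `Q(A) = 0`. So some strictly smaller ellipsoid still has probability `> 1/2`,
contradicting minimality. The limit is continuity from above of `P` along `E(μ, S, r + ε)`,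
legitimate because `P` is finite on compact sets, the density being bounded by `g 0 / √det S₀`.
-/

open scoped Topology Pointwise

section Ellipsoid

variable {p : ℕ}

lemma quadForm_zero (S : Matrix (Fin p) (Fin p) ℝ) : quadForm S 0 = 0 := by
  simp [quadForm]

lemma quadForm_smul (S : Matrix (Fin p) (Fin p) ℝ) (c : ℝ) (v : EuclideanSpace ℝ (Fin p)) :
    quadForm S (c • v) = c ^ 2 * quadForm S v := by
  simp only [quadForm, map_smul, real_inner_smul_left, real_inner_smul_right]
  ring

lemma quadForm_pos {S : Matrix (Fin p) (Fin p) ℝ} (hS : S.PosDef)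
    {v : EuclideanSpace ℝ (Fin p)} (hv : v ≠ 0) : 0 < quadForm S v := by
  rw [quadForm, EuclideanSpace.inner_eq_star_dotProduct, dotProduct_comm]
  exact hS.inv.dotProduct_mulVec_pos fun h => hv ((WithLp.equiv 2 _).injective h)

lemma quadForm_nonneg {S : Matrix (Fin p) (Fin p) ℝ} (hS : S.PosDef)
    (v : EuclideanSpace ℝ (Fin p)) : 0 ≤ quadForm S v := by
  rcases eq_or_ne v 0 with rfl | hv
  · exact (quadForm_zero S).ge
  · exact (quadForm_pos hS hv).le

lemma continuous_quadForm (S : Matrix (Fin p) (Fin p) ℝ) : Continuous (quadForm S) :=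
  continuous_id.inner (Matrix.toEuclideanLin S⁻¹).continuous_of_finiteDimensional

lemma exists_pos_mul_norm_sq_le_quadForm (hp : 1 ≤ p) {S : Matrix (Fin p) (Fin p) ℝ}
    (hS : S.PosDef) : ∃ m > 0, ∀ v : EuclideanSpace ℝ (Fin p), m * ‖v‖ ^ 2 ≤ quadForm S v := by
  have : Nontrivial (EuclideanSpace ℝ (Fin p)) := by
    have : Nonempty (Fin p) := ⟨⟨0, hp⟩⟩
    infer_instance
  obtain ⟨u, hu, hmin⟩ := (isCompact_sphere (0 : EuclideanSpace ℝ (Fin p)) 1).exists_isMinOn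
    (NormedSpace.sphere_nonempty.mpr zero_le_one) (continuous_quadForm S).continuousOn
  refine ⟨quadForm S u, quadForm_pos hS (ne_zero_of_mem_unit_sphere ⟨u, hu⟩), fun v => ?_⟩
  rcases eq_or_ne v 0 with rfl | hv
  · simp [quadForm_zero]
  have hnorm : ‖v‖ ≠ 0 := norm_ne_zero_iff.mpr hv
  have hsphere : ‖v‖⁻¹ • v ∈ Metric.sphere (0 : EuclideanSpace ℝ (Fin p)) 1 := by
    rw [mem_sphere_zero_iff_norm, norm_smul, norm_inv, norm_norm, inv_mul_cancel₀ hnorm]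
  calc quadForm S u * ‖v‖ ^ 2 ≤ quadForm S (‖v‖⁻¹ • v) * ‖v‖ ^ 2 := by
        gcongr; exact hmin hsphere
    _ = quadForm S v := by rw [quadForm_smul]; field_simp

lemma isClosed_ellipsoid (μ : EuclideanSpace ℝ (Fin p)) (S : Matrix (Fin p) (Fin p) ℝ)
    (r : ℝ) : IsClosed (ellipsoid μ S r) :=
  isClosed_le ((continuous_quadForm S).comp (continuous_sub_right μ)) continuous_const

lemma isCompact_ellipsoid (hp : 1 ≤ p) (μ : EuclideanSpace ℝ (Fin p))
    {S : Matrix (Fin p) (Fin p) ℝ} (hS : S.PosDef) (r : ℝ) :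
    IsCompact (ellipsoid μ S r) := by
  obtain ⟨m, hm, hbound⟩ := exists_pos_mul_norm_sq_le_quadForm hp hS
  refine Metric.isCompact_of_isClosed_isBounded (isClosed_ellipsoid μ S r)
    ((Metric.isBounded_closedBall (x := μ) (r := √(r ^ 2 / m))).subset fun x hx => ?_)
  rw [Metric.mem_closedBall, dist_eq_norm, ← Real.sqrt_sq (norm_nonneg _)]
  refine Real.sqrt_le_sqrt ((le_div_iff₀ hm).mpr ?_)
  linarith [hbound (x - μ), show quadForm S (x - μ) ≤ r ^ 2 from hx]

lemma ellipsoid_subset_ellipsoid (μ : EuclideanSpace ℝ (Fin p)) (S : Matrix (Fin p) (Fin p) ℝ)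
    {s t : ℝ} (hs : 0 ≤ s) (hst : s ≤ t) : ellipsoid μ S s ⊆ ellipsoid μ S t :=
  fun _ hx => hx.trans (pow_le_pow_left₀ hs hst 2)

lemma ellipsoid_eq_vadd_smul (μ : EuclideanSpace ℝ (Fin p)) (S : Matrix (Fin p) (Fin p) ℝ)
    {t : ℝ} (ht : 0 < t) : ellipsoid μ S t = μ +ᵥ t • ellipsoid 0 S 1 := by
  ext x
  rw [mem_vadd_set_iff_neg_vadd_mem, mem_smul_set_iff_inv_smul_mem₀ ht.ne', vadd_eq_add,
    neg_add_eq_sub]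
  simp only [ellipsoid, mem_ofPred_eq, sub_zero, one_pow, quadForm_smul, inv_pow]
  rw [inv_mul_le_iff₀ (by positivity), mul_one]

lemma volume_ellipsoid (μ : EuclideanSpace ℝ (Fin p)) (S : Matrix (Fin p) (Fin p) ℝ)
    {t : ℝ} (ht : 0 < t) :
    volume (ellipsoid μ S t) = ENNReal.ofReal (t ^ p) * volume (ellipsoid 0 S 1) := by
  rw [ellipsoid_eq_vadd_smul μ S ht, measure_vadd, Measure.addHaar_smul,
    finrank_euclideanSpace_fin, abs_of_nonneg (by positivity)]

lemma volume_ellipsoid_pos (μ : EuclideanSpace ℝ (Fin p)) (S : Matrix (Fin p) (Fin p) ℝ)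
    {r : ℝ} (hr : 0 < r) : 0 < volume (ellipsoid μ S r) := by
  have hopen : IsOpen {x : EuclideanSpace ℝ (Fin p) | quadForm S (x - μ) < r ^ 2} :=
    isOpen_lt ((continuous_quadForm S).comp (continuous_sub_right μ)) continuous_const
  refine (hopen.measure_pos volume ⟨μ, ?_⟩).trans_le
    (measure_mono fun x (hx : quadForm S (x - μ) < r ^ 2) => hx.le)
  simp [quadForm_zero, hr]

lemma volume_ellipsoid_lt_volume_ellipsoid (hp : 1 ≤ p) (μ : EuclideanSpace ℝ (Fin p))
    {S : Matrix (Fin p) (Fin p) ℝ} (hS : S.PosDef) {s t : ℝ} (hs : 0 < s) (hst : s < t) :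
    volume (ellipsoid μ S s) < volume (ellipsoid μ S t) := by
  rw [volume_ellipsoid μ S hs, volume_ellipsoid μ S (hs.trans hst)]
  refine ENNReal.mul_lt_mul_left (volume_ellipsoid_pos 0 S one_pos).ne'
    (isCompact_ellipsoid hp 0 hS 1).measure_lt_top.ne ?_
  exact (ENNReal.ofReal_lt_ofReal_iff (pow_pos (hs.trans hst) p)).mpr
    (pow_lt_pow_left₀ hst hs.le (by omega))

lemma volume_setOf_quadForm_eq (hp : 1 ≤ p) (μ : EuclideanSpace ℝ (Fin p))
    {S : Matrix (Fin p) (Fin p) ℝ} (hS : S.PosDef) {r : ℝ} (hr : 0 < r) :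
    volume {x : EuclideanSpace ℝ (Fin p) | quadForm S (x - μ) = r ^ 2} = 0 := by
  set V := volume (ellipsoid (0 : EuclideanSpace ℝ (Fin p)) S 1)
  have hV : V ≠ ∞ := (isCompact_ellipsoid hp 0 hS 1).measure_ne_top
  have hshell : ∀ t ∈ Ioo 0 r, volume {x | quadForm S (x - μ) = r ^ 2} ≤
      ENNReal.ofReal (r ^ p - t ^ p) * V := by
    rintro t ⟨ht, htr⟩
    have hsub : ellipsoid μ S t ⊆ ellipsoid μ S r := ellipsoid_subset_ellipsoid μ S ht.le htr.le
    calc volume {x | quadForm S (x - μ) = r ^ 2}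
        ≤ volume (ellipsoid μ S r \ ellipsoid μ S t) := by
          refine measure_mono fun x (hx : quadForm S (x - μ) = r ^ 2) =>
            ⟨hx.le, fun (hxt : quadForm S (x - μ) ≤ t ^ 2) => ?_⟩
          nlinarith
      _ = ENNReal.ofReal (r ^ p - t ^ p) * V := by
          rw [measure_sdiff hsub (isClosed_ellipsoid μ S t).nullMeasurableSet
            (isCompact_ellipsoid hp μ hS t).measure_ne_top, volume_ellipsoid μ S hr,
            volume_ellipsoid μ S ht, ← ENNReal.sub_mul fun _ _ => hV,
            ENNReal.ofReal_sub _ (by positivity)]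
  have hlim : Tendsto (fun t : ℝ => ENNReal.ofReal (r ^ p - t ^ p) * V) (𝓝[<] r) (𝓝 0) := by
    have h : Tendsto (fun t : ℝ => r ^ p - t ^ p) (𝓝 r) (𝓝 (r ^ p - r ^ p)) :=
      tendsto_const_nhds.sub ((continuous_pow p).tendsto r)
    rw [sub_self] at h
    simpa using ENNReal.Tendsto.mul_const (ENNReal.tendsto_ofReal (h.mono_left
      nhdsWithin_le_nhds)) (Or.inr hV)
  exact nonpos_iff_eq_zero.mp <| ge_of_tendsto hlim <|
    eventually_of_mem (Ioo_mem_nhdsLT hr) hshell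

lemma IsMVE.measure_eq_half (hp : 1 ≤ p) {P : Measure (EuclideanSpace ℝ (Fin p))}
    {μ : EuclideanSpace ℝ (Fin p)} {S : Matrix (Fin p) (Fin p) ℝ} (hS : S.PosDef) {r : ℝ}
    (hr : 0 < r) (hA : IsMVE P (ellipsoid μ S r))
    (hbd : P {x | quadForm S (x - μ) = r ^ 2} = 0) : P (ellipsoid μ S r) = 1 / 2 := by
  obtain ⟨u, hu_mono, hu_mem, hu_lim⟩ := exists_seq_strictMono_tendsto' hr
  have hcover : ellipsoid μ S r ⊆
      (⋃ n, ellipsoid μ S (u n)) ∪ {x | quadForm S (x - μ) = r ^ 2} := by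
    intro x hx
    rcases (show quadForm S (x - μ) ≤ r ^ 2 from hx).lt_or_eq with hlt | heq
    · obtain ⟨n, hn⟩ := ((hu_lim.pow 2).eventually_const_lt hlt).exists
      exact Or.inl (mem_iUnion.mpr ⟨n, hn.le⟩)
    · exact Or.inr heq
  have hunion : P (⋃ n, ellipsoid μ S (u n)) = P (ellipsoid μ S r) := by
    refine le_antisymm (measure_mono (iUnion_subset fun n =>
      ellipsoid_subset_ellipsoid μ S (hu_mem n).1.le (hu_mem n).2.le)) ?_
    calc P (ellipsoid μ S r) ≤ P (⋃ n, ellipsoid μ S (u n)) + 0 :=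
          hbd ▸ (measure_mono hcover).trans (measure_union_le _ _)
      _ = P (⋃ n, ellipsoid μ S (u n)) := add_zero _
  have hlim : Tendsto (fun n => P (ellipsoid μ S (u n))) atTop (𝓝 (P (ellipsoid μ S r))) :=
    hunion ▸ tendsto_measure_iUnion_atTop fun m n hmn =>
      ellipsoid_subset_ellipsoid μ S (hu_mem m).1.le (hu_mono.monotone hmn)
  refine le_antisymm ?_ hA.2.1
  by_contra! hlt
  obtain ⟨n, hn⟩ := (hlim.eventually_const_lt hlt).exists
  exact (volume_ellipsoid_lt_volume_ellipsoid hp μ hS (hu_mem n).1 (hu_mem n).2).not_ge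
    (hA.2.2 μ S (u n) hS (hu_mem n).1 hn.le)

lemma biInter_ellipsoid_add (μ : EuclideanSpace ℝ (Fin p)) (S : Matrix (Fin p) (Fin p) ℝ)
    {r : ℝ} (hr : 0 ≤ r) : ⋂ ε > (0 : ℝ), ellipsoid μ S (r + ε) = ellipsoid μ S r := by
  refine Subset.antisymm (fun x hx => ?_)
    (subset_iInter₂ fun ε hε => ellipsoid_subset_ellipsoid μ S hr (by linarith))
  have hlim : Tendsto (fun ε : ℝ => (r + ε) ^ 2) (𝓝[>] 0) (𝓝 (r ^ 2)) := by
    have h : Tendsto (fun ε : ℝ => (r + ε) ^ 2) (𝓝 0) (𝓝 ((r + 0) ^ 2)) :=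
      ((continuous_const.add continuous_id).pow 2).tendsto 0
    rw [add_zero] at h
    exact h.mono_left nhdsWithin_le_nhds
  exact ge_of_tendsto hlim (eventually_nhdsWithin_of_forall fun ε hε => mem_iInter₂.mp hx ε hε)

lemma tendsto_measure_ellipsoid_add (P : Measure (EuclideanSpace ℝ (Fin p)))
    (μ : EuclideanSpace ℝ (Fin p)) (S : Matrix (Fin p) (Fin p) ℝ) {r : ℝ} (hr : 0 ≤ r)
    (hfin : ∃ ε > 0, P (ellipsoid μ S (r + ε)) ≠ ∞) :
    Tendsto (fun ε => P (ellipsoid μ S (r + ε))) (𝓝[>] 0) (𝓝 (P (ellipsoid μ S r))) := by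
  rw [← biInter_ellipsoid_add μ S hr]
  exact tendsto_measure_biInter_gt (fun ε _ => (isClosed_ellipsoid μ S _).nullMeasurableSet)
    (fun i j hi hij => ellipsoid_subset_ellipsoid μ S (by linarith) (by linarith)) hfin

end Ellipsoid

section GrossError

variable {p : ℕ}

lemma ellMeasure_le_smul_volume {g : ℝ → ℝ} (hmono : AntitoneOn g (Ici 0))
    (μ₀ : EuclideanSpace ℝ (Fin p)) {S₀ : Matrix (Fin p) (Fin p) ℝ} (hS₀ : S₀.PosDef) :
    ellMeasure g μ₀ S₀ ≤ ENNReal.ofReal ((√S₀.det)⁻¹ * g 0) • volume := by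
  rw [ellMeasure, ← withDensity_const]
  refine withDensity_mono (Eventually.of_forall fun x => ENNReal.ofReal_le_ofReal ?_)
  exact mul_le_mul_of_nonneg_left
    (hmono self_mem_Ici (quadForm_nonneg hS₀ _) (quadForm_nonneg hS₀ _)) (by positivity)

lemma gemMeasure_apply (g : ℝ → ℝ) (μ₀ : EuclideanSpace ℝ (Fin p))
    (S₀ : Matrix (Fin p) (Fin p) ℝ) (π₀ : ℝ) (Q : Measure (EuclideanSpace ℝ (Fin p)))
    (s : Set (EuclideanSpace ℝ (Fin p))) :
    gemMeasure g μ₀ S₀ π₀ Q s =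
      ENNReal.ofReal (1 - π₀) * ellMeasure g μ₀ S₀ s + ENNReal.ofReal π₀ * Q s := by
  simp [gemMeasure]

lemma isFiniteMeasureOnCompacts_gemMeasure {g : ℝ → ℝ} (hmono : AntitoneOn g (Ici 0))
    (μ₀ : EuclideanSpace ℝ (Fin p)) {S₀ : Matrix (Fin p) (Fin p) ℝ} (hS₀ : S₀.PosDef)
    (π₀ : ℝ) (Q : Measure (EuclideanSpace ℝ (Fin p))) [IsFiniteMeasure Q] :
    IsFiniteMeasureOnCompacts (gemMeasure g μ₀ S₀ π₀ Q) where
  lt_top_of_isCompact K hK := by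
    have hell : ellMeasure g μ₀ S₀ K < ∞ :=
      ((ellMeasure_le_smul_volume hmono μ₀ hS₀) K).trans_lt
        (ENNReal.mul_lt_top ENNReal.ofReal_lt_top hK.measure_lt_top)
    rw [gemMeasure_apply]
    exact ENNReal.add_lt_top.mpr ⟨ENNReal.mul_lt_top ENNReal.ofReal_lt_top hell,
      ENNReal.mul_lt_top ENNReal.ofReal_lt_top (measure_lt_top Q K)⟩

lemma gemMeasure_setOf_quadForm_eq (hp : 1 ≤ p) (g : ℝ → ℝ) (μ₀ : EuclideanSpace ℝ (Fin p))
    (S₀ : Matrix (Fin p) (Fin p) ℝ) (π₀ : ℝ) {Q : Measure (EuclideanSpace ℝ (Fin p))}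
    {μ : EuclideanSpace ℝ (Fin p)} {S : Matrix (Fin p) (Fin p) ℝ} (hS : S.PosDef) {r : ℝ}
    (hr : 0 < r) (hQ : Q (ellipsoid μ S r) = 0) :
    gemMeasure g μ₀ S₀ π₀ Q {x | quadForm S (x - μ) = r ^ 2} = 0 := by
  have hell : ellMeasure g μ₀ S₀ ≪ volume := withDensity_absolutelyContinuous _ _
  rw [gemMeasure_apply, hell (volume_setOf_quadForm_eq hp μ hS hr),
    measure_mono_null (s := {x | quadForm S (x - μ) = r ^ 2}) (fun x hx => le_of_eq hx) hQ,
    mul_zero, mul_zero, add_zero]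

end GrossError

theorem gem_mve_prob_half_general {p : ℕ} (hp : 1 ≤ p) (g : ℝ → ℝ)
    (hmono : AntitoneOn g (Set.Ici 0))
    (μ₀ : EuclideanSpace ℝ (Fin p)) (S₀ : Matrix (Fin p) (Fin p) ℝ) (hS₀ : S₀.PosDef)
    (π₀ : ℝ)
    (Q : Measure (EuclideanSpace ℝ (Fin p))) [IsProbabilityMeasure Q]
    (hQ : ∀ B : Set (EuclideanSpace ℝ (Fin p)),
      IsMVE (gemMeasure g μ₀ S₀ π₀ Q) B → Q B = 0)
    (μ : EuclideanSpace ℝ (Fin p)) (S : Matrix (Fin p) (Fin p) ℝ) (hS : S.PosDef)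
    (r : ℝ) (hr : 0 < r)
    (hMVE : IsMVE (gemMeasure g μ₀ S₀ π₀ Q) (ellipsoid μ S r)) :
    gemMeasure g μ₀ S₀ π₀ Q (ellipsoid μ S r) = 1 / 2 ∧
      Filter.Tendsto (fun ε : ℝ => gemMeasure g μ₀ S₀ π₀ Q (ellipsoid μ S (r + ε)))
        (nhdsWithin 0 (Set.Ioi 0)) (nhds (1 / 2)) := by
  have hhalf : gemMeasure g μ₀ S₀ π₀ Q (ellipsoid μ S r) = 1 / 2 :=
    hMVE.measure_eq_half hp hS hr
      (gemMeasure_setOf_quadForm_eq hp g μ₀ S₀ π₀ hS hr (hQ _ hMVE))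
  have := isFiniteMeasureOnCompacts_gemMeasure hmono μ₀ hS₀ π₀ Q
  exact ⟨hhalf, hhalf ▸ tendsto_measure_ellipsoid_add _ μ S hr.le
    ⟨1, one_pos, (isCompact_ellipsoid hp μ hS _).measure_ne_top⟩⟩

theorem gem_mve_prob_half {p : ℕ} (hp : 1 ≤ p) (g : ℝ → ℝ)
    (hmono : AntitoneOn g (Set.Ici 0))
    (hnorm : ∫ x : EuclideanSpace ℝ (Fin p), g (‖x‖ ^ 2) = 1)
    (μ₀ : EuclideanSpace ℝ (Fin p)) (S₀ : Matrix (Fin p) (Fin p) ℝ) (hS₀ : S₀.PosDef)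
    (π₀ : ℝ) (hπ₀ : π₀ ∈ Set.Ico (0 : ℝ) (1 / 2))
    (Q : Measure (EuclideanSpace ℝ (Fin p))) [IsProbabilityMeasure Q]
    (hQ : ∀ B : Set (EuclideanSpace ℝ (Fin p)),
      IsMVE (gemMeasure g μ₀ S₀ π₀ Q) B → Q B = 0)
    (μ : EuclideanSpace ℝ (Fin p)) (S : Matrix (Fin p) (Fin p) ℝ) (hS : S.PosDef)
    (r : ℝ) (hr : 0 < r)
    (hMVE : IsMVE (gemMeasure g μ₀ S₀ π₀ Q) (ellipsoid μ S r)) :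
    gemMeasure g μ₀ S₀ π₀ Q (ellipsoid μ S r) = 1 / 2 ∧
      Filter.Tendsto (fun ε : ℝ => gemMeasure g μ₀ S₀ π₀ Q (ellipsoid μ S (r + ε)))
        (nhdsWithin 0 (Set.Ioi 0)) (nhds (1 / 2)) :=
  gem_mve_prob_half_general hp g hmono μ₀ S₀ hS₀ π₀ Q hQ μ S hS r hr hMVE
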